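/- arXiv:1709.06133 — 5 statements merged into one kernel-verified Lean document; each statement's English description precedes it below -/
import Mathlib

section
/- Let {e, b, ν} be a smooth orthonormal frame with invariants κg, κν, κt and suppose κg² + κt² ≠ 0. Define D_n(u) = (κt(u)·e(u) + κg(u)·ν(u))/√(κt² + κg²). Then D_n'(u) = (δ_n(u)/(κt² + κg²)^{3/2})·(-κg(u)·e(u) + κt(u)·ν(u)), where δ_n = κν(κg² + κt²) - κg·κt' + κt·κg'. -/
noncomputable section

abbrev R3 := Fin 3 → ℝ

def inner3 (a b : R3) : ℝ := a 0 * b 0 + a 1 * b 1 + a 2 * b 2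

def cross3 (a b : R3) : R3 :=
  ![a 1 * b 2 - a 2 * b 1, a 2 * b 0 - a 0 * b 2, a 0 * b 1 - a 1 * b 0]

/-- determinant of the 3×3 matrix with columns a, b, c -/
def det3 (a b c : R3) : ℝ := (Matrix.transpose (Matrix.of ![a, b, c])).det

def norm3 (a : R3) : ℝ := Real.sqrt (inner3 a a)

/-- normal Darboux direction -/
def Dn (e ν : ℝ → R3) (κg κt : ℝ → ℝ) : ℝ → R3 :=
  fun u => (Real.sqrt (κt u ^ 2 + κg u ^ 2))⁻¹ • (κt u • e u + κg u • ν u)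

/-- normal invariant δ_n -/
def δn (κg κν κt : ℝ → ℝ) : ℝ → ℝ :=
  fun u => κν u * (κg u ^ 2 + κt u ^ 2) - κg u * deriv κt u + κt u * deriv κg u

theorem stmt7
    (I : Set ℝ) (hI : IsOpen I)
    (e b ν : ℝ → R3) (κg κν κt : ℝ → ℝ)
    (he : ContDiffOn ℝ (⊤ : ℕ∞) e I) (hb : ContDiffOn ℝ (⊤ : ℕ∞) b I) (hν : ContDiffOn ℝ (⊤ : ℕ∞) ν I)
    (hκg : ContDiffOn ℝ (⊤ : ℕ∞) κg I) (hκν : ContDiffOn ℝ (⊤ : ℕ∞) κν I) (hκt : ContDiffOn ℝ (⊤ : ℕ∞) κt I)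
    (hee : ∀ u ∈ I, inner3 (e u) (e u) = 1)
    (hbb : ∀ u ∈ I, inner3 (b u) (b u) = 1)
    (hνν : ∀ u ∈ I, inner3 (ν u) (ν u) = 1)
    (heb : ∀ u ∈ I, inner3 (e u) (b u) = 0)
    (heν : ∀ u ∈ I, inner3 (e u) (ν u) = 0)
    (hbν : ∀ u ∈ I, inner3 (b u) (ν u) = 0)
    (hde : ∀ u ∈ I, deriv e u = κg u • b u + κν u • ν u)
    (hdb : ∀ u ∈ I, deriv b u = -κg u • e u + κt u • ν u)
    (hdν : ∀ u ∈ I, deriv ν u = -κν u • e u - κt u • b u)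
    (hnz : ∀ u ∈ I, κg u ^ 2 + κt u ^ 2 ≠ 0) :
    ∀ u ∈ I,
      deriv (Dn e ν κg κt) u =
        (δn κg κν κt u / (κt u ^ 2 + κg u ^ 2) ^ ((3 : ℝ) / 2)) •
          (-κg u • e u + κt u • ν u) := by
  intro u hu
  have hmem : I ∈ nhds u := hI.mem_nhds hu
  have hde' : HasDerivAt e (κg u • b u + κν u • ν u) u := by
    have h := ((he.contDiffAt hmem).differentiableAt (by simp)).hasDerivAt
    rwa [hde u hu] at h
  have hdν' : HasDerivAt ν (-κν u • e u - κt u • b u) u := by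
    have h := ((hν.contDiffAt hmem).differentiableAt (by simp)).hasDerivAt
    rwa [hdν u hu] at h
  have hκg' : HasDerivAt κg (deriv κg u) u :=
    ((hκg.contDiffAt hmem).differentiableAt (by simp)).hasDerivAt
  have hκt' : HasDerivAt κt (deriv κt u) u :=
    ((hκt.contDiffAt hmem).differentiableAt (by simp)).hasDerivAt
  have hspos : 0 < κt u ^ 2 + κg u ^ 2 := by
    rcases lt_or_eq_of_le (by positivity : (0:ℝ) ≤ κt u ^ 2 + κg u ^ 2) with h | h
    · exact h
    · exact absurd (by linarith : κg u ^ 2 + κt u ^ 2 = 0) (hnz u hu)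
  have hs : HasDerivAt (fun x => κt x ^ 2 + κg x ^ 2)
      (2 * κt u * deriv κt u + 2 * κg u * deriv κg u) u := by
    have h1 := hκt'.pow 2
    have h2 := hκg'.pow 2
    have := h1.add h2
    exact this.congr_deriv (by norm_num)
  have hrpos : 0 < Real.sqrt (κt u ^ 2 + κg u ^ 2) := Real.sqrt_pos.2 hspos
  have hsq : Real.sqrt (κt u ^ 2 + κg u ^ 2) ^ 2 = κt u ^ 2 + κg u ^ 2 :=
    Real.sq_sqrt hspos.le
  have hr : HasDerivAt (fun x => Real.sqrt (κt x ^ 2 + κg x ^ 2))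
      (1 / (2 * Real.sqrt (κt u ^ 2 + κg u ^ 2)) *
        (2 * κt u * deriv κt u + 2 * κg u * deriv κg u)) u :=
    (Real.hasDerivAt_sqrt hspos.ne').comp u hs
  have hinv := hr.inv hrpos.ne'
  have hg : HasDerivAt (fun x => κt x • e x + κg x • ν x)
      ((κt u • (κg u • b u + κν u • ν u) + deriv κt u • e u) +
       (κg u • (-κν u • e u - κt u • b u) + deriv κg u • ν u)) u :=
    (hκt'.smul hde').add (hκg'.smul hdν')
  have hD := hinv.smul hg
  have hDd : deriv (Dn e ν κg κt) u = _ := hD.deriv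
  rw [hDd]
  have hrpow : (κt u ^ 2 + κg u ^ 2) ^ ((3:ℝ)/2)
      = Real.sqrt (κt u ^ 2 + κg u ^ 2) * (κt u ^ 2 + κg u ^ 2) := by
    rw [show (3:ℝ)/2 = 1/2 + 1 by norm_num, Real.rpow_add hspos, Real.rpow_one,
      ← Real.sqrt_eq_rpow]
  rw [hrpow]
  simp only [δn]
  funext i
  simp only [Pi.add_apply, Pi.smul_apply, Pi.sub_apply, Pi.neg_apply, smul_eq_mul,
    neg_mul, mul_neg, Pi.inv_apply]
  set r := Real.sqrt (κt u ^ 2 + κg u ^ 2) with hrd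
  rw [show κt u ^ 2 + κg u ^ 2 = r ^ 2 from hsq.symm,
    show κg u ^ 2 + κt u ^ 2 = r ^ 2 by linarith [hsq]]
  have hrne : r ≠ 0 := hrpos.ne'
  field_simp
  linear_combination (e u i * deriv κt u + ν u i * deriv κg u) * hsq
end
end

section
/- Under the hypotheses of the previous context (orthonormal frame with γ̂' = ε·e, κt²+κν² ≠ 0, δ_o ≠ 0), the derivative of the striction curve s_o = γ̂ + t_o·D_o satisfies s_o' = -(σ_o/δ_o²)·(κt·e - κν·b), where σ_o = -ε·κν·δ_o' - (-ε'·κν + ε·κg·κt - 2ε·κν')·δ_o. In particular, ⟨s_o', ν⟩ = 0 and s_o' is parallel to D_o. -/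
noncomputable section

/-- osculating Darboux direction -/
def Do (e b : ℝ → R3) (κν κt : ℝ → ℝ) : ℝ → R3 :=
  fun u => (Real.sqrt (κt u ^ 2 + κν u ^ 2))⁻¹ • (κt u • e u - κν u • b u)

/-- osculating invariant δ_o -/
def δo (κg κν κt : ℝ → ℝ) : ℝ → ℝ :=
  fun u => κg u * (κν u ^ 2 + κt u ^ 2) - κt u * deriv κν u + κν u * deriv κt u

/-- the invariant σ_o -/
def σo (ε κg κν κt : ℝ → ℝ) : ℝ → ℝ :=
  fun u => -(ε u) * κν u * deriv (δo κg κν κt) u -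
    (-(deriv ε u) * κν u + ε u * κg u * κt u - 2 * ε u * deriv κν u) * δo κg κν κt u

/-- the striction curve of the osculating developable -/
def so (γ e b : ℝ → R3) (ε κg κν κt : ℝ → ℝ) : ℝ → R3 :=
  fun u => γ u + (-(ε u * κν u * Real.sqrt (κν u ^ 2 + κt u ^ 2)) / δo κg κν κt u) •
    Do e b κν κt u

theorem stmt12
    (I : Set ℝ) (hI : IsOpen I)
    (e b ν : ℝ → R3) (κg κν κt : ℝ → ℝ)
    (he : ContDiffOn ℝ (⊤ : ℕ∞) e I) (hb : ContDiffOn ℝ (⊤ : ℕ∞) b I) (hν : ContDiffOn ℝ (⊤ : ℕ∞) ν I)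
    (hκg : ContDiffOn ℝ (⊤ : ℕ∞) κg I) (hκν : ContDiffOn ℝ (⊤ : ℕ∞) κν I) (hκt : ContDiffOn ℝ (⊤ : ℕ∞) κt I)
    (hee : ∀ u ∈ I, inner3 (e u) (e u) = 1)
    (hbb : ∀ u ∈ I, inner3 (b u) (b u) = 1)
    (hνν : ∀ u ∈ I, inner3 (ν u) (ν u) = 1)
    (heb : ∀ u ∈ I, inner3 (e u) (b u) = 0)
    (heν : ∀ u ∈ I, inner3 (e u) (ν u) = 0)
    (hbν : ∀ u ∈ I, inner3 (b u) (ν u) = 0)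
    (hde : ∀ u ∈ I, deriv e u = κg u • b u + κν u • ν u)
    (hdb : ∀ u ∈ I, deriv b u = -κg u • e u + κt u • ν u)
    (hdν : ∀ u ∈ I, deriv ν u = -κν u • e u - κt u • b u)
    (γ : ℝ → R3) (ε : ℝ → ℝ)
    (hγsm : ContDiffOn ℝ (⊤ : ℕ∞) γ I) (hεsm : ContDiffOn ℝ (⊤ : ℕ∞) ε I)
    (hγ' : ∀ u ∈ I, deriv γ u = ε u • e u)
    (hnz : ∀ u ∈ I, κt u ^ 2 + κν u ^ 2 ≠ 0)
    (hδ : ∀ u ∈ I, δo κg κν κt u ≠ 0) :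
    ∀ u ∈ I,
      deriv (so γ e b ε κg κν κt) u =
        (-(σo ε κg κν κt u) / (δo κg κν κt u) ^ 2) • (κt u • e u - κν u • b u) ∧
      inner3 (deriv (so γ e b ε κg κν κt) u) (ν u) = 0 ∧
      ∃ c : ℝ, deriv (so γ e b ε κg κν κt) u = c • Do e b κν κt u := by
  intro u hu
  have hmem : I ∈ nhds u := hI.mem_nhds hu
  have hApos : 0 < κt u ^ 2 + κν u ^ 2 :=
    lt_of_le_of_ne (by positivity) (Ne.symm (hnz u hu))
  have hsA : Real.sqrt (κt u ^ 2 + κν u ^ 2) ≠ 0 := (Real.sqrt_pos.mpr hApos).ne'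
  have hδu := hδ u hu
  -- basic derivatives
  have dε : HasDerivAt ε (deriv ε u) u :=
    ((hεsm.contDiffAt hmem).differentiableAt (by simp)).hasDerivAt
  have dκg : HasDerivAt κg (deriv κg u) u :=
    ((hκg.contDiffAt hmem).differentiableAt (by simp)).hasDerivAt
  have dκν : HasDerivAt κν (deriv κν u) u :=
    ((hκν.contDiffAt hmem).differentiableAt (by simp)).hasDerivAt
  have dκt : HasDerivAt κt (deriv κt u) u :=
    ((hκt.contDiffAt hmem).differentiableAt (by simp)).hasDerivAt
  have dγ : HasDerivAt γ (ε u • e u) u := by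
    have := ((hγsm.contDiffAt hmem).differentiableAt (by simp)).hasDerivAt
    rwa [hγ' u hu] at this
  have de : HasDerivAt e (κg u • b u + κν u • ν u) u := by
    have := ((he.contDiffAt hmem).differentiableAt (by simp)).hasDerivAt
    rwa [hde u hu] at this
  have db : HasDerivAt b (-κg u • e u + κt u • ν u) u := by
    have := ((hb.contDiffAt hmem).differentiableAt (by simp)).hasDerivAt
    rwa [hdb u hu] at this
  -- derivatives of deriv κν, deriv κt
  have hκν1 : ContDiffOn ℝ (⊤ : ℕ∞) (deriv κν) I := hκν.deriv_of_isOpen hI (by simp)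
  have hκt1 : ContDiffOn ℝ (⊤ : ℕ∞) (deriv κt) I := hκt.deriv_of_isOpen hI (by simp)
  have dκν1 : HasDerivAt (deriv κν) (deriv (deriv κν) u) u :=
    ((hκν1.contDiffAt hmem).differentiableAt (by simp)).hasDerivAt
  have dκt1 : HasDerivAt (deriv κt) (deriv (deriv κt) u) u :=
    ((hκt1.contDiffAt hmem).differentiableAt (by simp)).hasDerivAt
  -- δo has a derivative at u
  have dδ0 : HasDerivAt (δo κg κν κt)
      (deriv κg u * (κν u ^ 2 + κt u ^ 2) +
        κg u * (2 * κν u * deriv κν u + 2 * κt u * deriv κt u) -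
        (deriv κt u * deriv κν u + κt u * deriv (deriv κν) u) +
        (deriv κν u * deriv κt u + κν u * deriv (deriv κt) u)) u := by
    have h1 : HasDerivAt (fun x => κg x * (κν x ^ 2 + κt x ^ 2))
        (deriv κg u * (κν u ^ 2 + κt u ^ 2) +
          κg u * (2 * κν u * deriv κν u + 2 * κt u * deriv κt u)) u := by
      have := dκg.mul (((dκν.pow 2).add (dκt.pow 2)))
      refine this.congr_deriv ?_
      norm_num only [Pi.add_apply, Pi.pow_apply]
      ring
    have h2 : HasDerivAt (fun x => κt x * deriv κν x)
        (deriv κt u * deriv κν u + κt u * deriv (deriv κν) u) u := dκt.mul dκν1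
    have h3 : HasDerivAt (fun x => κν x * deriv κt x)
        (deriv κν u * deriv κt u + κν u * deriv (deriv κt) u) u := dκν.mul dκt1
    exact (h1.sub h2).add h3
  have dδ : HasDerivAt (δo κg κν κt) (deriv (δo κg κν κt) u) u :=
    dδ0.differentiableAt.hasDerivAt
  -- the scalar coefficient g and its derivative
  have dnum : HasDerivAt (fun x => -(ε x * κν x))
      (-(deriv ε u * κν u + ε u * deriv κν u)) u := (dε.mul dκν).neg
  have dg : HasDerivAt (fun x => -(ε x * κν x) / δo κg κν κt x)
      ((-(deriv ε u * κν u + ε u * deriv κν u) * δo κg κν κt u -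
        -(ε u * κν u) * deriv (δo κg κν κt) u) / δo κg κν κt u ^ 2) u :=
    dnum.div dδ hδu
  -- the direction w and its derivative
  have dw : HasDerivAt (fun x => κt x • e x - κν x • b x)
      ((κt u • (κg u • b u + κν u • ν u) + deriv κt u • e u) -
        (κν u • (-κg u • e u + κt u • ν u) + deriv κν u • b u)) u :=
    (dκt.smul de).sub (dκν.smul db)
  -- the localized formula for so
  have dF : HasDerivAt
      (fun x => γ x + (-(ε x * κν x) / δo κg κν κt x) • (κt x • e x - κν x • b x))
      (ε u • e u +
        ((-(ε u * κν u) / δo κg κν κt u) •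
            ((κt u • (κg u • b u + κν u • ν u) + deriv κt u • e u) -
              (κν u • (-κg u • e u + κt u • ν u) + deriv κν u • b u)) +
          ((-(deriv ε u * κν u + ε u * deriv κν u) * δo κg κν κt u -
            -(ε u * κν u) * deriv (δo κg κν κt) u) / δo κg κν κt u ^ 2) •
            (κt u • e u - κν u • b u))) u :=
    dγ.add (dg.smul dw)
  have h_eq : so γ e b ε κg κν κt =ᶠ[nhds u]
      fun x => γ x + (-(ε x * κν x) / δo κg κν κt x) • (κt x • e x - κν x • b x) := by
    filter_upwards [hmem] with x hx
    have hAx : 0 < κt x ^ 2 + κν x ^ 2 :=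
      lt_of_le_of_ne (by positivity) (Ne.symm (hnz x hx))
    have hsAx : Real.sqrt (κt x ^ 2 + κν x ^ 2) ≠ 0 := (Real.sqrt_pos.mpr hAx).ne'
    show γ x + _ • Do e b κν κt x = _
    rw [Do, smul_smul]
    congr 2
    rw [show κν x ^ 2 + κt x ^ 2 = κt x ^ 2 + κν x ^ 2 by ring]
    have hδx := hδ x hx
    field_simp
  have hkey : deriv (so γ e b ε κg κν κt) u =
      (-(σo ε κg κν κt u) / (δo κg κν κt u) ^ 2) • (κt u • e u - κν u • b u) := by
    rw [h_eq.deriv_eq, dF.deriv]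
    have hδu' := hδu
    simp only [δo] at hδu' ⊢
    simp only [σo, δo]
    funext i
    simp only [Pi.add_apply, Pi.sub_apply, Pi.smul_apply, smul_eq_mul]
    field_simp
    ring
  refine ⟨hkey, ?_, ?_⟩
  · rw [hkey]
    have h1 := heν u hu
    have h2 := hbν u hu
    simp only [inner3] at h1 h2 ⊢
    simp only [Pi.sub_apply, Pi.smul_apply, smul_eq_mul]
    linear_combination (-(σo ε κg κν κt u) / (δo κg κν κt u) ^ 2 * κt u) * h1 -
      (-(σo ε κg κν κt u) / (δo κg κν κt u) ^ 2 * κν u) * h2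
  · refine ⟨(-(σo ε κg κν κt u) / (δo κg κν κt u) ^ 2) *
      Real.sqrt (κt u ^ 2 + κν u ^ 2), ?_⟩
    rw [hkey, Do, smul_smul, mul_assoc, mul_inv_cancel₀ hsA, mul_one]
end
end

section
/- Let γ̂ : I → ℝ³ with γ̂' = ε·e for an orthonormal frame {e, b, ν} with invariants κg, κν, κt, and assume κt²+κν² ≠ 0 and δ_o ≠ 0 on I. If the striction curve s_o = γ̂ - (⟨γ̂', D_o'⟩/⟨D_o', D_o'⟩)·D_o is a constant point c, then ⟨γ̂(u) - c, ν(u)⟩ = 0 for all u; i.e., the curve is a tangential contour edge of the central projection with center c. -/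
noncomputable section

/-- the striction curve of the osculating developable, via the general formula -/
def soStr (γ e b : ℝ → R3) (κν κt : ℝ → ℝ) : ℝ → R3 :=
  fun u => γ u - (inner3 (deriv γ u) (deriv (Do e b κν κt) u) /
    inner3 (deriv (Do e b κν κt) u) (deriv (Do e b κν κt) u)) • Do e b κν κt u

theorem stmt13
    (I : Set ℝ) (hI : IsOpen I)
    (e b ν : ℝ → R3) (κg κν κt : ℝ → ℝ)
    (he : ContDiffOn ℝ (⊤ : ℕ∞) e I) (hb : ContDiffOn ℝ (⊤ : ℕ∞) b I) (hν : ContDiffOn ℝ (⊤ : ℕ∞) ν I)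
    (hκg : ContDiffOn ℝ (⊤ : ℕ∞) κg I) (hκν : ContDiffOn ℝ (⊤ : ℕ∞) κν I) (hκt : ContDiffOn ℝ (⊤ : ℕ∞) κt I)
    (hee : ∀ u ∈ I, inner3 (e u) (e u) = 1)
    (hbb : ∀ u ∈ I, inner3 (b u) (b u) = 1)
    (hνν : ∀ u ∈ I, inner3 (ν u) (ν u) = 1)
    (heb : ∀ u ∈ I, inner3 (e u) (b u) = 0)
    (heν : ∀ u ∈ I, inner3 (e u) (ν u) = 0)
    (hbν : ∀ u ∈ I, inner3 (b u) (ν u) = 0)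
    (hde : ∀ u ∈ I, deriv e u = κg u • b u + κν u • ν u)
    (hdb : ∀ u ∈ I, deriv b u = -κg u • e u + κt u • ν u)
    (hdν : ∀ u ∈ I, deriv ν u = -κν u • e u - κt u • b u)
    (γ : ℝ → R3) (ε : ℝ → ℝ)
    (hγsm : ContDiffOn ℝ (⊤ : ℕ∞) γ I) (hεsm : ContDiffOn ℝ (⊤ : ℕ∞) ε I)
    (hγ' : ∀ u ∈ I, deriv γ u = ε u • e u)
    (hnz : ∀ u ∈ I, κt u ^ 2 + κν u ^ 2 ≠ 0)
    (hδ : ∀ u ∈ I, δo κg κν κt u ≠ 0)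
    (c : R3) (hc : ∀ u ∈ I, soStr γ e b κν κt u = c) :
    ∀ u ∈ I, inner3 (γ u - c) (ν u) = 0 := by
  intro u hu
  have h := hc u hu
  unfold soStr at h
  set a := inner3 (deriv γ u) (deriv (Do e b κν κt) u) /
    inner3 (deriv (Do e b κν κt) u) (deriv (Do e b κν κt) u) with ha
  have hgc : γ u - c = a • Do e b κν κt u := by
    rw [← h]; abel
  rw [hgc]
  have h1 := heν u hu
  have h2 := hbν u hu
  simp only [Do, inner3, Pi.smul_apply, Pi.sub_apply, smul_eq_mul] at *
  linear_combination (a * (Real.sqrt (κt u ^ 2 + κν u ^ 2))⁻¹ * κt u) * h1 - (a * (Real.sqrt (κt u ^ 2 + κν u ^ 2))⁻¹ * κν u) * h2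
end
end

section
/- Let γ̂ : I → ℝ³, {e, b, ν} an orthonormal frame along γ̂ with γ̂' = ε·e, invariants κg, κν, κt, with κt²+κν² ≠ 0 and δ_o ≠ 0 on I. Suppose there exists c ∈ ℝ³ with ⟨γ̂(u) - c, ν(u)⟩ = 0 for all u. Then the striction curve s_o(u) = γ̂ - (⟨γ̂', D_o'⟩/⟨D_o', D_o'⟩)·D_o is constantly equal to c. (Key steps: ⟨s_o - c, ν⟩ ≡ 0, differentiating and using ⟨s_o', ν⟩ ≡ 0 and ⟨s_o', ν'⟩ ≡ 0 gives ⟨s_o - c, ν'⟩ ≡ ⟨s_o - c, ν''⟩ ≡ 0, and ν, ν', ν'' are linearly independent since det(ν, ν', ν'') = δ_o ≠ 0.) -/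
noncomputable section

lemma inner3_smul_left (r : ℝ) (a b : R3) : inner3 (r • a) b = r * inner3 a b := by
  simp [inner3]; ring
lemma inner3_smul_right (r : ℝ) (a b : R3) : inner3 a (r • b) = r * inner3 a b := by
  simp [inner3]; ring
lemma inner3_add_left (a a' b : R3) : inner3 (a + a') b = inner3 a b + inner3 a' b := by
  simp [inner3]; ring
lemma inner3_add_right (a b b' : R3) : inner3 a (b + b') = inner3 a b + inner3 a b' := by
  simp [inner3]; ring
lemma inner3_sub_left (a a' b : R3) : inner3 (a - a') b = inner3 a b - inner3 a' b := by
  simp [inner3]; ring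
lemma inner3_sub_right (a b b' : R3) : inner3 a (b - b') = inner3 a b - inner3 a b' := by
  simp [inner3]; ring
lemma inner3_neg_left (a b : R3) : inner3 (-a) b = - inner3 a b := by
  simp [inner3]; ring
lemma inner3_neg_right (a b : R3) : inner3 a (-b) = - inner3 a b := by
  simp [inner3]; ring
lemma inner3_comm (a b : R3) : inner3 a b = inner3 b a := by
  simp [inner3]; ring
lemma inner3_zero_left (b : R3) : inner3 0 b = 0 := by simp [inner3]

lemma inner3_self_eq_zero {v : R3} (h : inner3 v v = 0) : v = 0 := by
  simp only [inner3] at h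
  have h0 : v 0 = 0 := by nlinarith [sq_nonneg (v 0), sq_nonneg (v 1), sq_nonneg (v 2)]
  have h1 : v 1 = 0 := by nlinarith [sq_nonneg (v 0), sq_nonneg (v 1), sq_nonneg (v 2)]
  have h2 : v 2 = 0 := by nlinarith [sq_nonneg (v 0), sq_nonneg (v 1), sq_nonneg (v 2)]
  funext i; fin_cases i <;> simpa

lemma hasDerivAt_inner3 {f g : ℝ → R3} {f' g' : R3} {u : ℝ}
    (hf : HasDerivAt f f' u) (hg : HasDerivAt g g' u) :
    HasDerivAt (fun v => inner3 (f v) (g v)) (inner3 f' (g u) + inner3 (f u) g') u := by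
  have hf0 := hasDerivAt_pi.mp hf 0
  have hf1 := hasDerivAt_pi.mp hf 1
  have hf2 := hasDerivAt_pi.mp hf 2
  have hg0 := hasDerivAt_pi.mp hg 0
  have hg1 := hasDerivAt_pi.mp hg 1
  have hg2 := hasDerivAt_pi.mp hg 2
  have h := ((hf0.mul hg0).add (hf1.mul hg1)).add (hf2.mul hg2)
  refine (h.congr_deriv (by simp only [inner3]; ring)).congr_of_eventuallyEq
    (Filter.Eventually.of_forall fun v => ?_)
  simp only [inner3, Pi.add_apply, Pi.mul_apply]

lemma fin3_mk_zero (h : (0:ℕ) < 3) : (⟨0, h⟩ : Fin 3) = 0 := rfl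
lemma fin3_mk_one (h : (1:ℕ) < 3) : (⟨1, h⟩ : Fin 3) = 1 := rfl
lemma fin3_mk_two (h : (2:ℕ) < 3) : (⟨2, h⟩ : Fin 3) = 2 := rfl

lemma orthonormal_eq_zero {e b ν g : R3}
    (hee : inner3 e e = 1) (hbb : inner3 b b = 1) (hνν : inner3 ν ν = 1)
    (heb : inner3 e b = 0) (heν : inner3 e ν = 0) (hbν : inner3 b ν = 0)
    (hge : inner3 g e = 0) (hgb : inner3 g b = 0) (hgν : inner3 g ν = 0) :
    g = 0 := by
  simp only [inner3] at hee hbb hνν heb heν hbν hge hgb hgν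
  have hMMt : (Matrix.of ![e, b, ν]) * (Matrix.of ![e, b, ν]).transpose = 1 := by
    ext i j
    fin_cases i <;> fin_cases j <;>
      simp only [Matrix.mul_apply, Matrix.transpose_apply, Matrix.of_apply, Fin.sum_univ_three,
        Matrix.cons_val_zero, Matrix.cons_val_one, Matrix.cons_val_two, Matrix.head_cons,
        Matrix.tail_cons, Matrix.one_apply, fin3_mk_zero, fin3_mk_one, fin3_mk_two] <;>
      norm_num [Fin.ext_iff] <;>
      first
        | linear_combination hee
        | linear_combination hbb
        | linear_combination hνν
        | linear_combination heb
        | linear_combination heν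
        | linear_combination hbν
  have h2 : (Matrix.of ![e, b, ν]).transpose * (Matrix.of ![e, b, ν]) = 1 :=
    mul_eq_one_comm.mp hMMt
  have h3 : (Matrix.of ![e, b, ν]).mulVec g = 0 := by
    ext i
    fin_cases i <;>
      simp only [Matrix.mulVec, dotProduct, Matrix.of_apply, Fin.sum_univ_three,
        Matrix.cons_val_zero, Matrix.cons_val_one, Matrix.cons_val_two, Matrix.head_cons,
        Matrix.tail_cons, Pi.zero_apply, fin3_mk_zero, fin3_mk_one, fin3_mk_two] <;>
      first
        | linear_combination hge
        | linear_combination hgb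
        | linear_combination hgν
  have h4 : (Matrix.of ![e, b, ν]).transpose.mulVec ((Matrix.of ![e, b, ν]).mulVec g) = g := by
    rw [Matrix.mulVec_mulVec, h2]; simp
  rw [h3] at h4
  simpa using h4.symm

lemma inner3_Do_left (e b : ℝ → R3) (κν κt : ℝ → ℝ) (u : ℝ) (X : R3) :
    inner3 (Do e b κν κt u) X =
      (Real.sqrt (κt u ^ 2 + κν u ^ 2))⁻¹ *
        (κt u * inner3 (e u) X - κν u * inner3 (b u) X) := by
  simp only [Do, inner3_smul_left, inner3_sub_left]

lemma inner3_Do_right (e b : ℝ → R3) (κν κt : ℝ → ℝ) (u : ℝ) (X : R3) :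
    inner3 X (Do e b κν κt u) =
      (Real.sqrt (κt u ^ 2 + κν u ^ 2))⁻¹ *
        (κt u * inner3 X (e u) - κν u * inner3 X (b u)) := by
  simp only [Do, inner3_smul_right, inner3_sub_right]

theorem stmt14
    (I : Set ℝ) (hI : IsOpen I)
    (e b ν : ℝ → R3) (κg κν κt : ℝ → ℝ)
    (he : ContDiffOn ℝ (⊤ : ℕ∞) e I) (hb : ContDiffOn ℝ (⊤ : ℕ∞) b I) (hν : ContDiffOn ℝ (⊤ : ℕ∞) ν I)
    (hκg : ContDiffOn ℝ (⊤ : ℕ∞) κg I) (hκν : ContDiffOn ℝ (⊤ : ℕ∞) κν I) (hκt : ContDiffOn ℝ (⊤ : ℕ∞) κt I)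
    (hee : ∀ u ∈ I, inner3 (e u) (e u) = 1)
    (hbb : ∀ u ∈ I, inner3 (b u) (b u) = 1)
    (hνν : ∀ u ∈ I, inner3 (ν u) (ν u) = 1)
    (heb : ∀ u ∈ I, inner3 (e u) (b u) = 0)
    (heν : ∀ u ∈ I, inner3 (e u) (ν u) = 0)
    (hbν : ∀ u ∈ I, inner3 (b u) (ν u) = 0)
    (hde : ∀ u ∈ I, deriv e u = κg u • b u + κν u • ν u)
    (hdb : ∀ u ∈ I, deriv b u = -κg u • e u + κt u • ν u)
    (hdν : ∀ u ∈ I, deriv ν u = -κν u • e u - κt u • b u)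
    (hconv : Convex ℝ I)
    (γ : ℝ → R3) (ε : ℝ → ℝ)
    (hγsm : ContDiffOn ℝ (⊤ : ℕ∞) γ I) (hεsm : ContDiffOn ℝ (⊤ : ℕ∞) ε I)
    (hγ' : ∀ u ∈ I, deriv γ u = ε u • e u)
    (hnz : ∀ u ∈ I, κt u ^ 2 + κν u ^ 2 ≠ 0)
    (hδ : ∀ u ∈ I, δo κg κν κt u ≠ 0)
    (c : R3) (hc : ∀ u ∈ I, inner3 (γ u - c) (ν u) = 0) :
    ∀ u ∈ I, soStr γ e b κν κt u = c := by
  have hdiff : ∀ {f : ℝ → R3}, ContDiffOn ℝ (⊤ : ℕ∞) f I → ∀ u ∈ I, HasDerivAt f (deriv f u) u := by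
    intro f hf u hu
    exact ((hf.contDiffAt (hI.mem_nhds hu)).differentiableAt (by simp)).hasDerivAt
  have hdiffS : ∀ {f : ℝ → ℝ}, ContDiffOn ℝ (⊤ : ℕ∞) f I → ∀ u ∈ I, HasDerivAt f (deriv f u) u := by
    intro f hf u hu
    exact ((hf.contDiffAt (hI.mem_nhds hu)).differentiableAt (by simp)).hasDerivAt
  have hpos : ∀ u ∈ I, 0 < κt u ^ 2 + κν u ^ 2 := fun u hu =>
    lt_of_le_of_ne (by positivity) (Ne.symm (hnz u hu))
  have hρpos : ∀ u ∈ I, 0 < Real.sqrt (κt u ^ 2 + κν u ^ 2) := fun u hu =>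
    Real.sqrt_pos.mpr (hpos u hu)
  have hρsq : ∀ u ∈ I, Real.sqrt (κt u ^ 2 + κν u ^ 2) ^ 2 = κt u ^ 2 + κν u ^ 2 := fun u hu =>
    Real.sq_sqrt (hpos u hu).le
  set D : ℝ → R3 := Do e b κν κt with hDdef
  have hρsm : ContDiffOn ℝ (⊤ : ℕ∞) (fun u => Real.sqrt (κt u ^ 2 + κν u ^ 2)) I :=
    ((hκt.pow 2).add (hκν.pow 2)).sqrt hnz
  have hDsm : ContDiffOn ℝ (⊤ : ℕ∞) D I :=
    (hρsm.inv (fun u hu => (hρpos u hu).ne')).smul ((hκt.smul he).sub (hκν.smul hb))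
  -- frame products, commuted versions
  have hbe : ∀ u ∈ I, inner3 (b u) (e u) = 0 := fun u hu => (inner3_comm _ _).trans (heb u hu)
  have hνe : ∀ u ∈ I, inner3 (ν u) (e u) = 0 := fun u hu => (inner3_comm _ _).trans (heν u hu)
  have hνb : ∀ u ∈ I, inner3 (ν u) (b u) = 0 := fun u hu => (inner3_comm _ _).trans (hbν u hu)
  -- step 1 : differentiate <γ-c, ν> = 0
  have r2 : ∀ u ∈ I, κν u * inner3 (γ u - c) (e u) + κt u * inner3 (γ u - c) (b u) = 0 := by
    intro u hu
    have hγc : HasDerivAt (fun v => γ v - c) (deriv γ u) u := (hdiff hγsm u hu).sub_const c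
    have hF := hasDerivAt_inner3 hγc (hdiff hν u hu)
    have hF0 : HasDerivAt (fun v => inner3 (γ v - c) (ν v)) 0 u :=
      (hasDerivAt_const u (0:ℝ)).congr_of_eventuallyEq
        (Filter.eventually_of_mem (hI.mem_nhds hu) (fun v hv => hc v hv))
    have huniq := hF.unique hF0
    rw [hγ' u hu, hdν u hu] at huniq
    simp only [inner3_smul_left, inner3_smul_right, inner3_sub_right, inner3_neg_right,
      inner3_smul_right] at huniq
    rw [heν u hu] at huniq
    linarith
  -- step 2 : γ - c is proportional to D
  set t : ℝ → ℝ := fun u => inner3 (γ u - c) (D u) with htdef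
  have h1 : ∀ u ∈ I, γ u - c = t u • D u := by
    intro u hu
    have hne := hnz u hu
    set r := (Real.sqrt (κt u ^ 2 + κν u ^ 2))⁻¹ with hrdef
    have hrr : r * r * (κt u ^ 2 + κν u ^ 2) = 1 := by
      rw [hrdef, ← mul_inv, Real.mul_self_sqrt (hpos u hu).le]
      exact inv_mul_cancel₀ hne
    have hg : γ u - c - t u • D u = 0 := by
      apply orthonormal_eq_zero (hee u hu) (hbb u hu) (hνν u hu) (heb u hu) (heν u hu) (hbν u hu)
      · rw [inner3_sub_left, inner3_smul_left]
        simp only [htdef, hDdef]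
        rw [inner3_Do_left, inner3_Do_right, hee u hu, hbe u hu, ← hrdef]
        linear_combination (-(inner3 (γ u - c) (e u))) * hrr + (r * r * κν u) * r2 u hu
      · rw [inner3_sub_left, inner3_smul_left]
        simp only [htdef, hDdef]
        rw [inner3_Do_left, inner3_Do_right, heb u hu, hbb u hu, ← hrdef]
        linear_combination (-(inner3 (γ u - c) (b u))) * hrr + (r * r * κt u) * r2 u hu
      · rw [inner3_sub_left, inner3_smul_left]
        simp only [htdef, hDdef]
        rw [inner3_Do_left, heν u hu, hbν u hu, hc u hu]
        ring
    exact sub_eq_zero.mp hg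
  -- step 3 : D is a unit vector on I
  have hDD : ∀ u ∈ I, inner3 (D u) (D u) = 1 := by
    intro u hu
    have hne := hnz u hu
    set r := (Real.sqrt (κt u ^ 2 + κν u ^ 2))⁻¹ with hrdef
    have hrr : r * r * (κt u ^ 2 + κν u ^ 2) = 1 := by
      rw [hrdef, ← mul_inv, Real.mul_self_sqrt (hpos u hu).le]
      exact inv_mul_cancel₀ hne
    simp only [hDdef]
    rw [inner3_Do_right, inner3_Do_left, inner3_Do_left, hee u hu, hbe u hu, heb u hu, hbb u hu,
      ← hrdef]
    linear_combination hrr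
  -- now fix u₀
  intro u₀ hu₀
  have hDu : HasDerivAt D (deriv D u₀) u₀ := hdiff hDsm u₀ hu₀
  -- <D, D'> = 0
  have hDD' : inner3 (D u₀) (deriv D u₀) = 0 := by
    have hG := hasDerivAt_inner3 hDu hDu
    have hG0 : HasDerivAt (fun v => inner3 (D v) (D v)) 0 u₀ :=
      (hasDerivAt_const u₀ (1:ℝ)).congr_of_eventuallyEq
        (Filter.eventually_of_mem (hI.mem_nhds hu₀) (fun v hv => hDD v hv))
    have h := hG.unique hG0
    have hcm : inner3 (deriv D u₀) (D u₀) = inner3 (D u₀) (deriv D u₀) := inner3_comm _ _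
    linarith
  -- the auxiliary vector w
  set w : ℝ → R3 := fun u => κν u • e u + κt u • b u with hwdef
  have hDw : ∀ u ∈ I, inner3 (D u) (w u) = 0 := by
    intro u hu
    simp only [hwdef, hDdef]
    rw [inner3_add_right, inner3_smul_right, inner3_smul_right, inner3_Do_left, inner3_Do_left,
      hee u hu, hbe u hu, heb u hu, hbb u hu]
    ring
  have hwd : HasDerivAt w (κν u₀ • deriv e u₀ + deriv κν u₀ • e u₀ +
      (κt u₀ • deriv b u₀ + deriv κt u₀ • b u₀)) u₀ :=
    ((hdiffS hκν u₀ hu₀).smul (hdiff he u₀ hu₀)).add ((hdiffS hκt u₀ hu₀).smul (hdiff hb u₀ hu₀))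
  have hkey : inner3 (deriv D u₀) (w u₀) + inner3 (D u₀) (κν u₀ • deriv e u₀ + deriv κν u₀ • e u₀ +
      (κt u₀ • deriv b u₀ + deriv κt u₀ • b u₀)) = 0 := by
    have hG := hasDerivAt_inner3 hDu hwd
    have hG0 : HasDerivAt (fun v => inner3 (D v) (w v)) 0 u₀ :=
      (hasDerivAt_const u₀ (0:ℝ)).congr_of_eventuallyEq
        (Filter.eventually_of_mem (hI.mem_nhds hu₀) (fun v hv => hDw v hv))
    exact hG.unique hG0
  have hcomp : inner3 (D u₀) (κν u₀ • deriv e u₀ + deriv κν u₀ • e u₀ +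
      (κt u₀ • deriv b u₀ + deriv κt u₀ • b u₀)) =
      -(Real.sqrt (κt u₀ ^ 2 + κν u₀ ^ 2))⁻¹ * δo κg κν κt u₀ := by
    rw [hde u₀ hu₀, hdb u₀ hu₀]
    simp only [hDdef, inner3_add_right, inner3_smul_right, inner3_neg_right, neg_smul]
    simp only [inner3_Do_left]
    rw [hee u₀ hu₀, hbe u₀ hu₀, heb u₀ hu₀, hbb u₀ hu₀, heν u₀ hu₀, hbν u₀ hu₀]
    simp only [δo]
    ring
  have hD'w : inner3 (deriv D u₀) (w u₀) ≠ 0 := by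
    have : inner3 (deriv D u₀) (w u₀) = (Real.sqrt (κt u₀ ^ 2 + κν u₀ ^ 2))⁻¹ * δo κg κν κt u₀ := by
      linarith [hkey, hcomp]
    rw [this]
    exact mul_ne_zero (inv_ne_zero (hρpos u₀ hu₀).ne') (hδ u₀ hu₀)
  have hD'D' : inner3 (deriv D u₀) (deriv D u₀) ≠ 0 := by
    intro h
    exact hD'w (by rw [inner3_self_eq_zero h, inner3_zero_left])
  -- derivative of t
  have hγc : HasDerivAt (fun v => γ v - c) (deriv γ u₀) u₀ := (hdiff hγsm u₀ hu₀).sub_const c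
  have htd : HasDerivAt t (inner3 (deriv γ u₀) (D u₀) + inner3 (γ u₀ - c) (deriv D u₀)) u₀ :=
    hasDerivAt_inner3 hγc hDu
  have hrhs : HasDerivAt (fun v => t v • D v)
      (t u₀ • deriv D u₀ + (inner3 (deriv γ u₀) (D u₀) + inner3 (γ u₀ - c) (deriv D u₀)) • D u₀)
      u₀ := htd.smul hDu
  have hlhs : HasDerivAt (fun v => γ v - c)
      (t u₀ • deriv D u₀ + (inner3 (deriv γ u₀) (D u₀) + inner3 (γ u₀ - c) (deriv D u₀)) • D u₀)
      u₀ :=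
    hrhs.congr_of_eventuallyEq
      (Filter.eventually_of_mem (hI.mem_nhds hu₀) (fun v hv => h1 v hv))
  have hkey2 : deriv γ u₀ = t u₀ • deriv D u₀ +
      (inner3 (deriv γ u₀) (D u₀) + inner3 (γ u₀ - c) (deriv D u₀)) • D u₀ := hγc.unique hlhs
  have hinner : inner3 (deriv γ u₀) (deriv D u₀) = t u₀ * inner3 (deriv D u₀) (deriv D u₀) := by
    conv_lhs => rw [hkey2]
    simp only [inner3_add_left, inner3_smul_left]
    rw [hDD']
    ring
  have hdivt : inner3 (deriv γ u₀) (deriv D u₀) / inner3 (deriv D u₀) (deriv D u₀) = t u₀ := by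
    rw [hinner]
    field_simp
  show γ u₀ - (inner3 (deriv γ u₀) (deriv D u₀) / inner3 (deriv D u₀) (deriv D u₀)) • D u₀ = c
  rw [hdivt, ← h1 u₀ hu₀]
  abel
end
end

section
/- With notation as in the previous context (f_u + ε·f_v = v·g, ε(0) = 0, ε'(0) ≠ 0), at the point (0,0): det(f_uu, f_uuu, f_v × g) = 2(ε'(0))²·det(f_v, g, f_v × g). In particular, if f_v(0,0) and g(0,0) are linearly independent, then f_uu(0,0), f_uuu(0,0), and f_v(0,0) × g(0,0) are linearly independent. -/
noncomputable section

def Du (h : ℝ → ℝ → R3) : ℝ → ℝ → R3 := fun u v => deriv (fun s => h s v) u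
def Dv (h : ℝ → ℝ → R3) : ℝ → ℝ → R3 := fun u v => deriv (fun t => h u t) v
def DuS (h : ℝ → ℝ → ℝ) : ℝ → ℝ → ℝ := fun u v => deriv (fun s => h s v) u
def DvS (h : ℝ → ℝ → ℝ) : ℝ → ℝ → ℝ := fun u v => deriv (fun t => h u t) v

open scoped ContDiff

def P1 (F : ℝ × ℝ → R3) : ℝ × ℝ → R3 := fun p => fderiv ℝ F p (1, 0)
def P2 (F : ℝ × ℝ → R3) : ℝ × ℝ → R3 := fun p => fderiv ℝ F p (0, 1)

lemma P_smooth {F : ℝ × ℝ → R3} (hF : ContDiff ℝ ∞ F) (w : ℝ × ℝ) :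
    ContDiff ℝ ∞ (fun p => fderiv ℝ F p w) :=
  (hF.fderiv_right (by simp)).clm_apply contDiff_const

lemma P1_smooth {F : ℝ × ℝ → R3} (hF : ContDiff ℝ ∞ F) : ContDiff ℝ ∞ (P1 F) := P_smooth hF _
lemma P2_smooth {F : ℝ × ℝ → R3} (hF : ContDiff ℝ ∞ F) : ContDiff ℝ ∞ (P2 F) := P_smooth hF _

lemma hasDerivAt_slice1 {F : ℝ × ℝ → R3} (hF : ContDiff ℝ ∞ F) (u v : ℝ) :
    HasDerivAt (fun s => F (s, v)) (P1 F (u, v)) u := by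
  have h1 : HasFDerivAt F (fderiv ℝ F (u, v)) (u, v) :=
    ((hF.differentiable (by simp)) (u, v)).hasFDerivAt
  have h2 : HasDerivAt (fun s : ℝ => (s, v)) ((1 : ℝ), (0 : ℝ)) u :=
    (hasDerivAt_id u).prodMk (hasDerivAt_const u v)
  exact h1.comp_hasDerivAt u h2

lemma hasDerivAt_slice2 {F : ℝ × ℝ → R3} (hF : ContDiff ℝ ∞ F) (u v : ℝ) :
    HasDerivAt (fun t => F (u, t)) (P2 F (u, v)) v := by
  have h1 : HasFDerivAt F (fderiv ℝ F (u, v)) (u, v) :=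
    ((hF.differentiable (by simp)) (u, v)).hasFDerivAt
  have h2 : HasDerivAt (fun t : ℝ => (u, t)) ((0 : ℝ), (1 : ℝ)) v :=
    (hasDerivAt_const v u).prodMk (hasDerivAt_id v)
  exact h1.comp_hasDerivAt v h2

lemma P1P2_symm {F : ℝ × ℝ → R3} (hF : ContDiff ℝ ∞ F) (p : ℝ × ℝ) :
    P1 (P2 F) p = P2 (P1 F) p := by
  have hd : DifferentiableAt ℝ (fderiv ℝ F) p :=
    ((hF.fderiv_right (m := ∞) (by simp)).differentiable (by simp)) p
  have key : ∀ w z : ℝ × ℝ, fderiv ℝ (fun q => fderiv ℝ F q w) p z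
      = fderiv ℝ (fderiv ℝ F) p z w := by
    intro w z
    have h : HasFDerivAt (fun q => fderiv ℝ F q w)
        ((ContinuousLinearMap.apply ℝ R3 w).comp (fderiv ℝ (fderiv ℝ F) p)) p :=
      (ContinuousLinearMap.apply ℝ R3 w).hasFDerivAt.comp p hd.hasFDerivAt
    rw [h.fderiv]; rfl
  have hsymm : ∀ z w : ℝ × ℝ, fderiv ℝ (fderiv ℝ F) p z w = fderiv ℝ (fderiv ℝ F) p w z :=
    hF.contDiffAt.isSymmSndFDerivAt (by simp; exact WithTop.coe_le_coe.mpr (le_top : (2 : ℕ∞) ≤ ⊤))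
  show fderiv ℝ (fun q => fderiv ℝ F q (0,1)) p (1,0)
      = fderiv ℝ (fun q => fderiv ℝ F q (1,0)) p (0,1)
  rw [key, key, hsymm]

lemma alg_part (v1 v2 : R3) (a b : ℝ) (ha : a ≠ 0) :
    det3 (-(a • v1)) (-(b • v1) - (2 * a) • v2) (cross3 v1 v2)
      = 2 * a ^ 2 * det3 v1 v2 (cross3 v1 v2) ∧
    (LinearIndependent ℝ ![v1, v2] →
      LinearIndependent ℝ ![-(a • v1), -(b • v1) - (2 * a) • v2, cross3 v1 v2]) := by
  have hdet_eq : det3 (-(a • v1)) (-(b • v1) - (2 * a) • v2) (cross3 v1 v2)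
      = 2 * a ^ 2 * det3 v1 v2 (cross3 v1 v2) := by
    simp only [det3, cross3, Matrix.det_fin_three, Matrix.transpose_apply, Matrix.of_apply,
      Matrix.cons_val', Matrix.cons_val_zero, Matrix.cons_val_one, Matrix.head_cons,
      Matrix.empty_val', Matrix.cons_val_fin_one, Matrix.head_fin_const,
      Matrix.cons_val_two, Matrix.tail_cons, Pi.sub_apply, Pi.neg_apply, Pi.smul_apply,
      smul_eq_mul]
    ring
  refine ⟨hdet_eq, fun hli => ?_⟩
  have hcr : cross3 v1 v2 = crossProduct v1 v2 := (cross_apply v1 v2).symm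
  have hn : cross3 v1 v2 ≠ 0 := by
    rw [hcr]; exact crossProduct_ne_zero_iff_linearIndependent.mpr hli
  have hdet2 : det3 v1 v2 (cross3 v1 v2)
      = (cross3 v1 v2) 0 ^ 2 + (cross3 v1 v2) 1 ^ 2 + (cross3 v1 v2) 2 ^ 2 := by
    simp only [det3, cross3, Matrix.det_fin_three, Matrix.transpose_apply, Matrix.of_apply,
      Matrix.cons_val', Matrix.cons_val_zero, Matrix.cons_val_one, Matrix.head_cons,
      Matrix.empty_val', Matrix.cons_val_fin_one, Matrix.head_fin_const,
      Matrix.cons_val_two, Matrix.tail_cons]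
    ring
  set n := cross3 v1 v2 with hn_def
  have hdet_ne : det3 v1 v2 n ≠ 0 := by
    rw [hdet2]
    intro h0
    obtain ⟨i, hi⟩ := Function.ne_iff.mp hn
    apply hi
    have h00 : n 0 ^ 2 = 0 ∧ n 1 ^ 2 = 0 ∧ n 2 ^ 2 = 0 := by
      refine ⟨?_, ?_, ?_⟩ <;> nlinarith [sq_nonneg (n 0), sq_nonneg (n 1), sq_nonneg (n 2)]
    fin_cases i <;>
      · simp only [Pi.zero_apply]
        first
          | exact (pow_eq_zero_iff two_ne_zero).mp h00.1
          | exact (pow_eq_zero_iff two_ne_zero).mp h00.2.1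
          | exact (pow_eq_zero_iff two_ne_zero).mp h00.2.2
  have hbig : det3 (-(a • v1)) (-(b • v1) - (2 * a) • v2) n ≠ 0 := by
    rw [hdet_eq]
    exact mul_ne_zero (by positivity) hdet_ne
  have hM : IsUnit (Matrix.of ![-(a • v1), -(b • v1) - (2 * a) • v2, n]) := by
    rw [Matrix.isUnit_iff_isUnit_det, isUnit_iff_ne_zero]
    have hdt : (Matrix.of ![-(a • v1), -(b • v1) - (2 * a) • v2, n]).det
        = det3 (-(a • v1)) (-(b • v1) - (2 * a) • v2) n := by
      rw [det3, Matrix.det_transpose]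
    rw [hdt]; exact hbig
  have := Matrix.linearIndependent_rows_iff_isUnit.mpr hM
  exact this

theorem stmt16
    (f g : ℝ → ℝ → R3) (ε : ℝ → ℝ)
    (hf : ContDiff ℝ (⊤ : ℕ∞) (fun p : ℝ × ℝ => f p.1 p.2))
    (hgsm : ContDiff ℝ (⊤ : ℕ∞) (fun p : ℝ × ℝ => g p.1 p.2))
    (hεsm : ContDiff ℝ (⊤ : ℕ∞) ε)
    (hε0 : ε 0 = 0) (hε0' : deriv ε 0 ≠ 0)
    (hg : ∀ u v : ℝ, Du f u v + ε u • Dv f u v = v • g u v) :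
    det3 (Du (Du f) 0 0) (Du (Du (Du f)) 0 0) (cross3 (Dv f 0 0) (g 0 0)) =
      2 * (deriv ε 0) ^ 2 * det3 (Dv f 0 0) (g 0 0) (cross3 (Dv f 0 0) (g 0 0)) ∧
    (LinearIndependent ℝ ![Dv f 0 0, g 0 0] →
      LinearIndependent ℝ
        ![Du (Du f) 0 0, Du (Du (Du f)) 0 0, cross3 (Dv f 0 0) (g 0 0)]) := by
  have hf' : ContDiff ℝ ∞ (fun p : ℝ × ℝ => f p.1 p.2) := hf.of_le (by simp)
  have hg' : ContDiff ℝ ∞ (fun p : ℝ × ℝ => g p.1 p.2) := hgsm.of_le (by simp)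
  have hε' : ContDiff ℝ ∞ ε := hεsm.of_le (by simp)
  set F : ℝ × ℝ → R3 := fun p => f p.1 p.2 with hFdef
  set G : ℝ × ℝ → R3 := fun p => g p.1 p.2 with hGdef
  have hP1F := P1_smooth hf'
  have hP2F := P2_smooth hf'
  have hP11 := P1_smooth hP1F
  have hP12 := P1_smooth hP2F
  -- the basic relation
  have hE1 : ∀ u v : ℝ, P1 F (u, v) = v • g u v - ε u • P2 F (u, v) := by
    intro u v
    have h1 : Du f u v = P1 F (u, v) := (hasDerivAt_slice1 hf' u v).deriv
    have h2 : Dv f u v = P2 F (u, v) := (hasDerivAt_slice2 hf' u v).deriv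
    have h3 := hg u v
    rw [h1, h2] at h3
    exact eq_sub_of_add_eq h3
  have hfv : Dv f 0 0 = P2 F (0, 0) := (hasDerivAt_slice2 hf' 0 0).deriv
  have heq : Du f = fun u v => P1 F (u, v) := by
    funext u v; exact (hasDerivAt_slice1 hf' u v).deriv
  have heq2 : Du (Du f) = fun u v => P1 (P1 F) (u, v) := by
    rw [heq]; funext u v; exact (hasDerivAt_slice1 hP1F u v).deriv
  have hDuDu : Du (Du f) 0 0 = P1 (P1 F) (0, 0) := by rw [heq2]
  have hDuDuDu : Du (Du (Du f)) 0 0 = P1 (P1 (P1 F)) (0, 0) := by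
    rw [heq2]; exact (hasDerivAt_slice1 hP11 0 0).deriv
  have hεd : ∀ u : ℝ, HasDerivAt ε (deriv ε u) u :=
    fun u => ((hε'.differentiable (by simp)) u).hasDerivAt
  have hεd2 : HasDerivAt (deriv ε) (deriv (deriv ε) 0) 0 :=
    (((contDiff_infty_iff_deriv.mp hε').2.differentiable (by simp)) 0).hasDerivAt
  -- second derivative in u on the line v = 0
  have hE2 : ∀ u : ℝ, P1 (P1 F) (u, 0)
      = -(deriv ε u • P2 F (u, 0)) - ε u • P1 (P2 F) (u, 0) := by
    intro u
    have hfun : (fun s => P1 F (s, 0))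
        = fun s => (0 : ℝ) • g s 0 - ε s • P2 F (s, 0) := by
      funext s; exact hE1 s 0
    have h1 : HasDerivAt (fun s => ε s • P2 F (s, 0))
        (ε u • P1 (P2 F) (u, 0) + deriv ε u • P2 F (u, 0)) u :=
      (hεd u).smul (hasDerivAt_slice1 hP2F u 0)
    have h2 : HasDerivAt (fun s => (0 : ℝ) • g s 0) ((0 : ℝ) • P1 G (u, 0)) u :=
      (hasDerivAt_slice1 hg' u 0).const_smul (0 : ℝ)
    have h3 := (h2.fun_sub h1).deriv
    have h0 : P1 (P1 F) (u, 0) = deriv (fun s => P1 F (s, 0)) u :=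
      ((hasDerivAt_slice1 hP1F u 0).deriv).symm
    rw [h0, hfun, h3]
    module
  -- third derivative in u at (0,0)
  have hE3 : P1 (P1 (P1 F)) (0, 0)
      = -(deriv (deriv ε) 0 • P2 F (0, 0)) - (2 * deriv ε 0) • P1 (P2 F) (0, 0) := by
    have hfun : (fun s => P1 (P1 F) (s, 0))
        = fun s => -(deriv ε s • P2 F (s, 0)) - ε s • P1 (P2 F) (s, 0) := by
      funext s; exact hE2 s
    have h1 : HasDerivAt (fun s => deriv ε s • P2 F (s, 0))
        (deriv ε 0 • P1 (P2 F) (0, 0) + deriv (deriv ε) 0 • P2 F (0, 0)) 0 :=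
      hεd2.smul (hasDerivAt_slice1 hP2F 0 0)
    have h2 : HasDerivAt (fun s => ε s • P1 (P2 F) (s, 0))
        (ε 0 • P1 (P1 (P2 F)) (0, 0) + deriv ε 0 • P1 (P2 F) (0, 0)) 0 :=
      (hεd 0).smul (hasDerivAt_slice1 hP12 0 0)
    have h3 := (h1.fun_neg.fun_sub h2).deriv
    have h0 : P1 (P1 (P1 F)) (0, 0) = deriv (fun s => P1 (P1 F) (s, 0)) 0 :=
      ((hasDerivAt_slice1 hP11 0 0).deriv).symm
    rw [h0, hfun, h3, hε0]
    module
  -- mixed second derivative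
  have hE4 : P1 (P2 F) (0, 0) = g 0 0 := by
    rw [P1P2_symm hf']
    have h0 : P2 (P1 F) (0, 0) = deriv (fun t => P1 F (0, t)) 0 :=
      ((hasDerivAt_slice2 hP1F 0 0).deriv).symm
    have hfun : (fun t => P1 F (0, t)) = fun t => t • g 0 t - ε 0 • P2 F (0, t) := by
      funext t; exact hE1 0 t
    have h1 : HasDerivAt (fun t : ℝ => t • g 0 t)
        ((0 : ℝ) • P2 G (0, 0) + (1 : ℝ) • g 0 0) 0 :=
      (hasDerivAt_id 0).smul (hasDerivAt_slice2 hg' 0 0)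
    have h2 : HasDerivAt (fun t => ε 0 • P2 F (0, t)) (ε 0 • P2 (P2 F) (0, 0)) 0 :=
      (hasDerivAt_slice2 hP2F 0 0).const_smul (ε 0)
    rw [h0, hfun, (h1.fun_sub h2).deriv, hε0]
    module
  have hfuu : Du (Du f) 0 0 = -(deriv ε 0 • Dv f 0 0) := by
    rw [hDuDu, hE2 0, hε0, hfv]
    module
  have hfuuu : Du (Du (Du f)) 0 0
      = -(deriv (deriv ε) 0 • Dv f 0 0) - (2 * deriv ε 0) • g 0 0 := by
    rw [hDuDuDu, hE3, hE4, hfv]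
  rw [hfuu, hfuuu]
  exact alg_part (Dv f 0 0) (g 0 0) (deriv ε 0) (deriv (deriv ε) 0) hε0'
end
end
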